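/- arXiv:2402.00748 — 4 statements merged into one kernel-verified Lean document; each statement's English description precedes it below -/
import Mathlib

section
/- Let k ≥ 1, let R > 1, and let f, f̃ : [0,∞)^k → ℝ be functions supported on the simplex Δ_k(1) and satisfying f(0, t_2, ..., t_k) = f̃(0, t_2, ..., t_k) for all (t_2, ..., t_k) ∈ [0,∞)^{k-1}. For a tuple d = (d_1, ..., d_k) of positive integers set λ_d := μ(d_1)···μ(d_k)·f(log d_1/log R, ..., log d_k/log R) and λ̃_d := μ(d_1)···μ(d_k)·f̃(log d_1/log R, ..., log d_k/log R). Let h_1, ..., h_k be integers and let n be a positive integer such that n + h_1 is a prime strictly greater than R. Then ∑_{d : d_i | n + h_i for all i} λ_d = ∑_{d : d_i | n + h_i for all i} λ̃_d. -/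
/-!
Every divisor `d₁` of the prime `p = n + h₁ > R` is `1` or `p`. For `d₁ = 1` the point
`(log dᵢ / log R)ᵢ` lies on the face `t₁ = 0`, where `f` and `f̃` agree; for `d₁ = p` its first
coordinate exceeds `1`, so it lies outside the simplex `Δ_k(1)` and both functions vanish there.
-/

theorem eq_of_eq_on_face_of_support_simplex {ι : Type*} [Fintype ι] {f g : (ι → ℝ) → ℝ}
    (hf : ∀ t : ι → ℝ, (∀ i, 0 ≤ t i) → ¬ (∑ i, t i) ≤ 1 → f t = 0)
    (hg : ∀ t : ι → ℝ, (∀ i, 0 ≤ t i) → ¬ (∑ i, t i) ≤ 1 → g t = 0)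
    {i₀ : ι} (hfg : ∀ t : ι → ℝ, (∀ i, 0 ≤ t i) → t i₀ = 0 → f t = g t)
    {t : ι → ℝ} (ht : ∀ i, 0 ≤ t i) (hti₀ : t i₀ = 0 ∨ 1 < t i₀) : f t = g t := by
  rcases hti₀ with hzero | hbig
  · exact hfg t ht hzero
  · have hout : ¬ (∑ i, t i) ≤ 1 :=
      (hbig.trans_le (Finset.single_le_sum (fun i _ => ht i) (Finset.mem_univ i₀))).not_ge
    rw [hf t ht hout, hg t ht hout]

theorem log_div_log_eq_zero_or_one_lt_of_mem_divisors_prime {R : ℝ} (hR : 1 < R) {p : ℕ}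
    (hp : p.Prime) (hpR : R < p) {d : ℕ} (hd : d ∈ p.divisors) :
    Real.log d / Real.log R = 0 ∨ 1 < Real.log d / Real.log R := by
  rw [hp.divisors, Finset.mem_insert, Finset.mem_singleton] at hd
  rcases hd with rfl | rfl
  · simp
  · exact Or.inr ((one_lt_div (Real.log_pos hR)).2 (Real.log_lt_log (by linarith) hpR))

theorem sieve_weights_agree_general (k : ℕ) (hk : 1 ≤ k) (R : ℝ) (hR : 1 < R)
    (f ftilde : (Fin k → ℝ) → ℝ)
    (hfsupp : ∀ t : Fin k → ℝ, (∀ i, 0 ≤ t i) → ¬ (∑ i, t i) ≤ 1 → f t = 0)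
    (hgsupp : ∀ t : Fin k → ℝ, (∀ i, 0 ≤ t i) → ¬ (∑ i, t i) ≤ 1 → ftilde t = 0)
    (hagree : ∀ t : Fin k → ℝ, (∀ i, 0 ≤ t i) → t ⟨0, hk⟩ = 0 → f t = ftilde t)
    (h : Fin k → ℤ) (n : ℕ)
    (hprime : Prime ((n : ℤ) + h ⟨0, hk⟩))
    (hbig : R < (((n : ℤ) + h ⟨0, hk⟩ : ℤ) : ℝ)) :
    ∑ d ∈ Fintype.piFinset (fun i => ((n : ℤ) + h i).natAbs.divisors),
        (∏ i, (ArithmeticFunction.moebius (d i) : ℝ)) *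
          f (fun i => Real.log (d i) / Real.log R) =
      ∑ d ∈ Fintype.piFinset (fun i => ((n : ℤ) + h i).natAbs.divisors),
        (∏ i, (ArithmeticFunction.moebius (d i) : ℝ)) *
          ftilde (fun i => Real.log (d i) / Real.log R) := by
  refine Finset.sum_congr rfl fun d hd => congrArg (_ * ·) ?_
  rw [Fintype.mem_piFinset] at hd
  have hp : ((n : ℤ) + h ⟨0, hk⟩).natAbs.Prime := Int.prime_iff_natAbs_prime.mp hprime
  have hpR : R < ((n : ℤ) + h ⟨0, hk⟩).natAbs := by
    rw [Nat.cast_natAbs]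
    exact hbig.trans_le (mod_cast le_abs_self _)
  exact eq_of_eq_on_face_of_support_simplex hfsupp hgsupp hagree
    (fun i => div_nonneg (Real.log_natCast_nonneg _) (Real.log_nonneg hR.le))
    (log_div_log_eq_zero_or_one_lt_of_mem_divisors_prime hR hp hpR (hd _))

/-- Tao's observation: if `n + h 0` is a prime exceeding `R`, then the sieve weights built
from `f` and from `f̃` agree, provided `f` and `f̃` are supported on `Δ_k(1)` and have the
same trace on `{t₁ = 0}`.  The sum over divisor tuples `d` with `d i ∣ n + h i` is taken
over tuples of (positive) divisors of `|n + h i|`. -/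
theorem sieve_weights_agree (k : ℕ) (hk : 1 ≤ k) (R : ℝ) (hR : 1 < R)
    (f ftilde : (Fin k → ℝ) → ℝ)
    (hfsupp : ∀ t : Fin k → ℝ, (∀ i, 0 ≤ t i) → ¬ (∑ i, t i) ≤ 1 → f t = 0)
    (hgsupp : ∀ t : Fin k → ℝ, (∀ i, 0 ≤ t i) → ¬ (∑ i, t i) ≤ 1 → ftilde t = 0)
    (hagree : ∀ t : Fin k → ℝ, (∀ i, 0 ≤ t i) → t ⟨0, hk⟩ = 0 → f t = ftilde t)
    (h : Fin k → ℤ) (n : ℕ) (hn : 0 < n)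
    (hprime : Prime ((n : ℤ) + h ⟨0, hk⟩))
    (hbig : R < (((n : ℤ) + h ⟨0, hk⟩ : ℤ) : ℝ)) :
    ∑ d ∈ Fintype.piFinset (fun i => ((n : ℤ) + h i).natAbs.divisors),
        (∏ i, (ArithmeticFunction.moebius (d i) : ℝ)) *
          f (fun i => Real.log (d i) / Real.log R) =
      ∑ d ∈ Fintype.piFinset (fun i => ((n : ℤ) + h i).natAbs.divisors),
        (∏ i, (ArithmeticFunction.moebius (d i) : ℝ)) *
          ftilde (fun i => Real.log (d i) / Real.log R) :=
  sieve_weights_agree_general k hk R hR f ftilde hfsupp hgsupp hagree h n hprime hbig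
end

section
/- Let f̃ : [0,∞)^5 → ℝ be a smooth function supported on the simplex Δ_5(1). Then ∫_{Δ_4(1)} ( ∂^4 f̃(0, t_2, t_3, t_4, t_5) / ∂t_2 ∂t_3 ∂t_4 ∂t_5 )^2 dt_2 dt_3 dt_4 dt_5 ≥ ∫_{Δ_3(1)} (1/(1 − t_2 − t_3 − t_4)) · ( ∂^3 f̃(0, t_2, t_3, t_4, 0) / ∂t_2 ∂t_3 ∂t_4 )^2 dt_2 dt_3 dt_4, where the integrand on the right is interpreted as 0 when t_2 + t_3 + t_4 = 1. -/
open MeasureTheory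

/-- The simplex `Δ_k(y) = {t ∈ [0,∞)^k : t 0 + ... + t (k-1) ≤ y}`. -/
def simplexSet (k : ℕ) (y : ℝ) : Set (Fin k → ℝ) :=
  {t | (∀ i, 0 ≤ t i) ∧ (∑ i, t i) ≤ y}

/-- Partial derivative of `g : ℝ^n → ℝ` in the `i`-th coordinate direction. -/
noncomputable def pd {n : ℕ} (i : Fin n) (g : (Fin n → ℝ) → ℝ) : (Fin n → ℝ) → ℝ :=
  fun x => fderiv ℝ g x (Pi.single i 1)

lemma pd_contDiff {n : ℕ} (i : Fin n) {g : (Fin n → ℝ) → ℝ} (hg : ContDiff ℝ (⊤ : ℕ∞) g) :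
    ContDiff ℝ (⊤ : ℕ∞) (pd i g) := by
  have h1 : ContDiff ℝ (⊤ : ℕ∞) (fderiv ℝ g) := hg.fderiv_right (by simp)
  exact (ContinuousLinearMap.apply ℝ ℝ (Pi.single i 1 : Fin n → ℝ)).contDiff.comp h1

lemma pd_swap {n : ℕ} (i j : Fin n) {g : (Fin n → ℝ) → ℝ} (hg : ContDiff ℝ (⊤ : ℕ∞) g) :
    pd i (pd j g) = pd j (pd i g) := by
  funext x
  have hdg : Differentiable ℝ g := hg.differentiable (by simp)
  have h1 : ContDiff ℝ (⊤ : ℕ∞) (fderiv ℝ g) := hg.fderiv_right (by simp)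
  have hdiff : DifferentiableAt ℝ (fderiv ℝ g) x := (h1.differentiable (by simp)) x
  have key : ∀ v w : Fin n → ℝ,
      fderiv ℝ (fun y => fderiv ℝ g y w) x v = fderiv ℝ (fderiv ℝ g) x v w := by
    intro v w
    rw [fderiv_clm_apply hdiff (differentiableAt_const w)]
    simp
  have hsymm := second_derivative_symmetric (f := g) (f' := fderiv ℝ g)
    (f'' := fderiv ℝ (fderiv ℝ g) x) (fun y => (hdg y).hasFDerivAt) hdiff.hasFDerivAt
  show fderiv ℝ (fun y => fderiv ℝ g y (Pi.single j 1)) x (Pi.single i 1)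
      = fderiv ℝ (fun y => fderiv ℝ g y (Pi.single i 1)) x (Pi.single j 1)
  rw [key, key, hsymm]

lemma pd_zero_of_open {n : ℕ} (i : Fin n) {g : (Fin n → ℝ) → ℝ} {O : Set (Fin n → ℝ)}
    (hO : IsOpen O) (hg0 : ∀ x ∈ O, g x = 0) {x : Fin n → ℝ} (hx : x ∈ O) :
    pd i g x = 0 := by
  have h : g =ᶠ[nhds x] (fun _ => (0:ℝ)) := by
    filter_upwards [hO.mem_nhds hx] with y hy using hg0 y hy
  show fderiv ℝ g x (Pi.single i 1) = 0
  rw [h.fderiv_eq, fderiv_fun_const]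
  simp

noncomputable def Lmap (n : ℕ) : (Fin n → ℝ) →L[ℝ] (Fin (n+1) → ℝ) :=
  ContinuousLinearMap.pi (Fin.cases 0 (fun j => ContinuousLinearMap.proj j))

lemma Lmap_apply {n : ℕ} (s : Fin n → ℝ) : Lmap n s = Fin.cons 0 s := by
  funext j
  induction j using Fin.cases <;> simp [Lmap, Fin.cons]

lemma Lmap_single {n : ℕ} (i : Fin n) :
    Lmap n (Pi.single i 1) = Pi.single i.succ (1:ℝ) := by
  rw [Lmap_apply]
  funext j
  induction j using Fin.cases with
  | zero => simp [Pi.single_eq_of_ne (Fin.succ_ne_zero i).symm]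
  | succ k =>
    simp only [Fin.cons_succ]
    by_cases h : k = i
    · subst h; simp
    · rw [Pi.single_eq_of_ne h, Pi.single_eq_of_ne (fun hc => h (Fin.succ_injective _ hc))]

lemma pd_comp_L {n : ℕ} (i : Fin n) {g : (Fin (n+1) → ℝ) → ℝ} (hg : Differentiable ℝ g)
    (s : Fin n → ℝ) : pd i.succ g (Lmap n s) = pd i (fun x => g (Lmap n x)) s := by
  show fderiv ℝ g (Lmap n s) (Pi.single i.succ 1) = fderiv ℝ (g ∘ Lmap n) s (Pi.single i 1)
  rw [fderiv_comp s (hg _) (Lmap n).differentiableAt, (Lmap n).fderiv]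
  simp [Lmap_single]

lemma sq_integral_le {h : ℝ → ℝ} (hc : Continuous h) {Y : ℝ} (hY : 0 ≤ Y) :
    (∫ t in Set.Ioc 0 Y, h t) ^ 2 ≤ Y * ∫ t in Set.Ioc 0 Y, (h t) ^ 2 := by
  set μ := volume.restrict (Set.Ioc (0:ℝ) Y) with hμ
  have hfin : IsFiniteMeasure μ := by
    constructor
    rw [hμ, Measure.restrict_apply_univ, Real.volume_Ioc]
    exact ENNReal.ofReal_lt_top
  obtain ⟨C, hC⟩ : ∃ C, ∀ t ∈ Set.Icc (0:ℝ) Y, ‖h t‖ ≤ C :=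
    isCompact_Icc.exists_bound_of_continuousOn hc.continuousOn
  have h2 : ENNReal.ofReal (2:ℝ) = 2 := by norm_num
  have hmem : MemLp h (ENNReal.ofReal 2) μ := by
    rw [h2]
    refine MemLp.of_bound (hc.aestronglyMeasurable) C ?_
    rw [hμ, ae_restrict_iff' measurableSet_Ioc]
    exact Filter.Eventually.of_forall (fun t ht => hC t ⟨le_of_lt ht.1, ht.2⟩)
  have hone : MemLp (fun _ : ℝ => (1:ℝ)) (ENNReal.ofReal 2) μ := memLp_const 1
  have hpq : Real.HolderConjugate 2 2 := Real.HolderConjugate.two_two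
  have key := integral_mul_norm_le_Lp_mul_Lq (μ := μ) hpq hone hmem
  simp only [norm_one, one_mul, Real.one_rpow] at key
  have hμuniv : (∫ _t, (1:ℝ) ∂μ) = Y := by
    simp only [integral_const, smul_eq_mul, mul_one]
    rw [hμ, measureReal_def, Measure.restrict_apply_univ, Real.volume_Ioc, sub_zero, ENNReal.toReal_ofReal hY]
  rw [hμuniv] at key
  have hsq : ∀ t, ‖h t‖ ^ (2:ℝ) = (h t)^2 := fun t => by
    rw [Real.rpow_two, Real.norm_eq_abs, sq_abs]
  simp only [hsq] at key
  have hB : 0 ≤ ∫ t, (h t)^2 ∂μ := integral_nonneg (fun t => sq_nonneg _)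
  have habs : |∫ t, h t ∂μ| ≤ ∫ t, ‖h t‖ ∂μ := (Real.norm_eq_abs _) ▸ norm_integral_le_integral_norm (μ := μ) h
  have hrpow : ∀ x : ℝ, 0 ≤ x → (x ^ ((1:ℝ)/2)) ^ 2 = x := by
    intro x hx
    rw [← Real.rpow_natCast (x ^ ((1:ℝ)/2)) 2, ← Real.rpow_mul hx]
    norm_num
  calc (∫ t in Set.Ioc 0 Y, h t) ^ 2 = |∫ t, h t ∂μ| ^ 2 := by rw [sq_abs]
    _ ≤ (Y ^ ((1:ℝ)/2) * (∫ t, (h t)^2 ∂μ) ^ ((1:ℝ)/2)) ^ 2 := by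
        apply pow_le_pow_left₀ (abs_nonneg _) (habs.trans key)
    _ = Y * ∫ t in Set.Ioc 0 Y, (h t)^2 := by
        rw [mul_pow, hrpow Y hY, hrpow _ hB]

lemma core_lemma {H : (Fin 4 → ℝ) → ℝ} (hH : ContDiff ℝ (⊤ : ℕ∞) H)
    (hH0 : ∀ s : Fin 4 → ℝ, (∀ i, 0 < s i) → 1 < ∑ i, s i → H s = 0)
    {u : Fin 3 → ℝ} (hu : ∀ i, 0 < u i) (hsum : ∑ i, u i < 1) :
    (1/(1 - ∑ i, u i)) * (H (Fin.snoc u 0)) ^ 2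
      ≤ ∫ t in Set.Ioc 0 (1 - ∑ i, u i), (pd 3 H (Fin.snoc u t))^2 := by
  set Y : ℝ := 1 - ∑ i, u i with hYdef
  have hY : 0 < Y := by simp [hYdef]; linarith
  have h34 : (3 : Fin 4) = Fin.last 3 := by decide
  set ρ : ℝ → Fin 4 → ℝ := fun t => (Fin.snoc u 0 : Fin 4 → ℝ) + t • (Pi.single (3 : Fin 4) 1 : Fin 4 → ℝ) with hρdef
  have hρ : ∀ t, ρ t = Fin.snoc u t := by
    intro t
    funext j
    induction j using Fin.lastCases with
    | last => simp [hρdef, h34, Fin.snoc]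
    | cast i =>
      have : Fin.castSucc i ≠ Fin.last 3 := Fin.ne_last_of_lt i.castSucc_lt_last
      simp [hρdef, h34, Pi.single_eq_of_ne (h34 ▸ this)]
  have hρd : ∀ t : ℝ, HasDerivAt ρ (Pi.single (3 : Fin 4) 1) t := by
    intro t
    have gen : ∀ c v : Fin 4 → ℝ, HasDerivAt (fun x : ℝ => c + x • v) v t := fun c v => by
      simpa using ((hasDerivAt_id t).smul_const v).const_add c
    exact gen _ _
  have hρc : Continuous ρ := continuous_const.add (continuous_id.smul continuous_const)
  set φ : ℝ → ℝ := fun t => H (ρ t) with hφdef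
  have hφd : ∀ t : ℝ, HasDerivAt φ (pd 3 H (ρ t)) t := fun t =>
    ((hH.differentiable (by simp) _).hasFDerivAt).comp_hasDerivAt t (hρd t)
  have hcont3 : Continuous (pd 3 H) := (pd_contDiff _ hH).continuous
  have hρin : ∀ t, Y < t → (∀ i, 0 < ρ t i) ∧ 1 < ∑ i, ρ t i := by
    intro t ht
    rw [hρ]
    constructor
    · intro i
      induction i using Fin.lastCases with
      | last => rw [Fin.snoc_last]; linarith
      | cast i => rw [Fin.snoc_castSucc]; exact hu i
    · rw [Fin.sum_univ_castSucc]
      simp only [Fin.snoc_castSucc, Fin.snoc_last]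
      simp only [hYdef] at ht
      linarith
  have hφY : φ Y = 0 := by
    have hclosed : IsClosed (φ ⁻¹' {0}) :=
      IsClosed.preimage (hH.continuous.comp hρc) isClosed_singleton
    have hsub : Set.Ioi Y ⊆ φ ⁻¹' {0} := fun t ht =>
      hH0 (ρ t) (hρin t ht).1 (hρin t ht).2
    have : Y ∈ closure (Set.Ioi Y) := by rw [closure_Ioi]; exact Set.self_mem_Ici
    exact ((closure_mono hsub).trans_eq hclosed.closure_eq) this
  have hftc : ∫ t in (0:ℝ)..Y, pd 3 H (ρ t) = φ Y - φ 0 :=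
    intervalIntegral.integral_eq_sub_of_hasDerivAt (fun t _ => hφd t)
      ((hcont3.comp hρc).intervalIntegrable 0 Y)
  have hφ0 : φ 0 = - ∫ t in Set.Ioc 0 Y, pd 3 H (ρ t) := by
    rw [← intervalIntegral.integral_of_le hY.le, hftc, hφY]
    ring
  have hCS := sq_integral_le (hcont3.comp hρc) hY.le
  have hfinal : (H (Fin.snoc u 0)) ^ 2 ≤ Y * ∫ t in Set.Ioc 0 Y, (pd 3 H (ρ t))^2 := by
    have : H (Fin.snoc u 0) = φ 0 := by show _ = H (ρ 0); rw [hρ]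
    rw [this, hφ0, neg_pow]
    simpa using hCS
  have : ∫ t in Set.Ioc 0 Y, (pd 3 H (ρ t))^2 = ∫ t in Set.Ioc 0 Y, (pd 3 H (Fin.snoc u t))^2 := by
    congr 1
    funext t
    rw [hρ]
  rw [this] at hfinal
  rw [one_div, inv_mul_le_iff₀ hY]
  exact hfinal

lemma simplex_isClosed (k : ℕ) (y : ℝ) : IsClosed (simplexSet k y) := by
  have h1 : IsClosed {t : Fin k → ℝ | ∀ i, 0 ≤ t i} := by
    have : {t : Fin k → ℝ | ∀ i, 0 ≤ t i} = ⋂ i, {t | 0 ≤ t i} := by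
      ext t; simp
    rw [this]
    exact isClosed_iInter (fun i => isClosed_le continuous_const (continuous_apply i))
  have h2 : IsClosed {t : Fin k → ℝ | (∑ i, t i) ≤ y} :=
    isClosed_le (continuous_finset_sum _ (fun i _ => continuous_apply i)) continuous_const
  exact h1.inter h2

lemma simplex_subset_Icc (k : ℕ) : simplexSet k 1 ⊆ Set.Icc (0 : Fin k → ℝ) 1 := by
  rintro t ⟨h0, hsum⟩
  refine ⟨fun i => h0 i, fun i => ?_⟩
  calc t i ≤ ∑ j, t j := Finset.single_le_sum (fun j _ => h0 j) (Finset.mem_univ i)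
    _ ≤ 1 := hsum

/-- Tao's lower bound for the square integral of the mixed partial derivative of a smooth
function `f̃ : [0,∞)⁵ → ℝ` supported on `Δ₅(1)`.  (The coordinates `t₁, …, t₅` of the paper
are indexed by `0, …, 4`; the convention that the right-hand integrand vanishes when
`t₂ + t₃ + t₄ = 1` is automatic since in Lean `1/0 = 0`.) -/
theorem tao_square_integral_lower_bound (f : (Fin 5 → ℝ) → ℝ)
    (hf : ContDiff ℝ (⊤ : ℕ∞) f)
    (hsupp : ∀ t : Fin 5 → ℝ, (∀ i, 0 ≤ t i) → ¬ (∑ i, t i) ≤ 1 → f t = 0) :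
    (∫ s in simplexSet 4 1,
        (pd 1 (pd 2 (pd 3 (pd 4 f))) (Fin.cons 0 s)) ^ 2) ≥
      ∫ u in simplexSet 3 1,
        (1 / (1 - (u 0 + u 1 + u 2))) *
          (pd 1 (pd 2 (pd 3 f)) ![0, u 0, u 1, u 2, 0]) ^ 2 := by
  have hfd : Differentiable ℝ f := hf.differentiable (by simp)
  set F : (Fin 4 → ℝ) → ℝ := fun s => f (Lmap 4 s) with hFdef
  have hF : ContDiff ℝ (⊤ : ℕ∞) F := hf.comp (Lmap 4).contDiff
  -- transfer of iterated partial derivatives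
  have h4 : ∀ s, pd 4 f (Lmap 4 s) = pd 3 F s := by
    intro s
    rw [show (4 : Fin 5) = (3 : Fin 4).succ by decide]
    exact pd_comp_L 3 hfd s
  have h3 : ∀ s, pd 3 (pd 4 f) (Lmap 4 s) = pd 2 (pd 3 F) s := by
    intro s
    rw [show (3 : Fin 5) = (2 : Fin 4).succ by decide]
    rw [pd_comp_L 2 ((pd_contDiff 4 hf).differentiable (by simp)) s]
    congr 1
    funext x
    exact h4 x
  have h2 : ∀ s, pd 2 (pd 3 (pd 4 f)) (Lmap 4 s) = pd 1 (pd 2 (pd 3 F)) s := by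
    intro s
    rw [show (2 : Fin 5) = (1 : Fin 4).succ by decide]
    rw [pd_comp_L 1 ((pd_contDiff 3 (pd_contDiff 4 hf)).differentiable (by simp)) s]
    congr 1
    funext x
    exact h3 x
  have h1 : ∀ s, pd 1 (pd 2 (pd 3 (pd 4 f))) (Lmap 4 s) = pd 0 (pd 1 (pd 2 (pd 3 F))) s := by
    intro s
    rw [show (1 : Fin 5) = (0 : Fin 4).succ by decide]
    rw [pd_comp_L 0 ((pd_contDiff 2 (pd_contDiff 3 (pd_contDiff 4 hf))).differentiable (by simp)) s]
    congr 1
    funext x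
    exact h2 x
  -- same for the three-fold derivative
  have k3 : ∀ s, pd 3 f (Lmap 4 s) = pd 2 F s := by
    intro s
    rw [show (3 : Fin 5) = (2 : Fin 4).succ by decide]
    exact pd_comp_L 2 hfd s
  have k2 : ∀ s, pd 2 (pd 3 f) (Lmap 4 s) = pd 1 (pd 2 F) s := by
    intro s
    rw [show (2 : Fin 5) = (1 : Fin 4).succ by decide]
    rw [pd_comp_L 1 ((pd_contDiff 3 hf).differentiable (by simp)) s]
    congr 1
    funext x
    exact k3 x
  have k1 : ∀ s, pd 1 (pd 2 (pd 3 f)) (Lmap 4 s) = pd 0 (pd 1 (pd 2 F)) s := by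
    intro s
    rw [show (1 : Fin 5) = (0 : Fin 4).succ by decide]
    rw [pd_comp_L 0 ((pd_contDiff 2 (pd_contDiff 3 hf)).differentiable (by simp)) s]
    congr 1
    funext x
    exact k2 x
  set H : (Fin 4 → ℝ) → ℝ := pd 0 (pd 1 (pd 2 F)) with hHdef
  have hH : ContDiff ℝ (⊤ : ℕ∞) H := pd_contDiff 0 (pd_contDiff 1 (pd_contDiff 2 hF))
  -- swap derivatives
  have hswap : pd 0 (pd 1 (pd 2 (pd 3 F))) = pd 3 H := by
    rw [hHdef, pd_swap 2 3 hF, pd_swap 1 3 (pd_contDiff 2 hF),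
      pd_swap 0 3 (pd_contDiff 1 (pd_contDiff 2 hF))]
  -- vanishing on the open overflow set
  set O : Set (Fin 4 → ℝ) := {s | (∀ i, 0 < s i) ∧ 1 < ∑ i, s i} with hOdef
  have hOopen : IsOpen O := by
    have e1 : O = (⋂ i, {s : Fin 4 → ℝ | 0 < s i}) ∩ {s : Fin 4 → ℝ | 1 < ∑ i, s i} := by
      ext s; simp [hOdef]
    rw [e1]
    exact (isOpen_iInter_of_finite
        (fun i => isOpen_lt continuous_const (continuous_apply i))).inter
      (isOpen_lt continuous_const (continuous_finset_sum _ (fun i _ => continuous_apply i)))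
  have hFO : ∀ s ∈ O, F s = 0 := by
    rintro s ⟨hs0, hs1⟩
    rw [hFdef]
    simp only
    rw [Lmap_apply]
    apply hsupp
    · intro i
      induction i using Fin.cases with
      | zero => simp
      | succ j => simp only [Fin.cons_succ]; exact (hs0 j).le
    · rw [Fin.sum_cons, not_le]
      simpa using hs1
  have hHO : ∀ s : Fin 4 → ℝ, (∀ i, 0 < s i) → 1 < ∑ i, s i → H s = 0 := by
    intro s hs0 hs1
    have m : s ∈ O := ⟨hs0, hs1⟩
    apply pd_zero_of_open 0 hOopen _ m
    intro x hx
    apply pd_zero_of_open 1 hOopen _ hx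
    intro y hy
    exact pd_zero_of_open 2 hOopen hFO hy
  -- measure-theoretic part
  have hA4m : MeasurableSet (simplexSet 4 1) := (simplex_isClosed 4 1).measurableSet
  have hA3m : MeasurableSet (simplexSet 3 1) := (simplex_isClosed 3 1).measurableSet
  set G : (Fin 4 → ℝ) → ℝ := fun s => (pd 3 H s)^2 with hGdef
  have hGc : Continuous G := ((pd_contDiff 3 hH).continuous).pow 2
  have hGint : IntegrableOn G (simplexSet 4 1) :=
    ((hGc.continuousOn).integrableOn_compact isCompact_Icc).mono_set (simplex_subset_Icc 4)
  have hInd : Integrable ((simplexSet 4 1).indicator G) := (integrable_indicator_iff hA4m).2 hGint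
  set e := MeasurableEquiv.piFinSuccAbove (fun _ : Fin 4 => ℝ) (Fin.last 3) with hedef
  have hmp : MeasurePreserving e.symm :=
    (volume_preserving_piFinSuccAbove (fun _ : Fin 4 => ℝ) (Fin.last 3)).symm
  have hesymm : ∀ p : ℝ × (Fin 3 → ℝ), e.symm p = Fin.snoc p.2 p.1 := by
    intro p
    rw [hedef]
    simp [MeasurableEquiv.piFinSuccAbove_symm_apply, Fin.insertNthEquiv]
    exact Fin.insertNth_last' _ _
  set Φ : ℝ × (Fin 3 → ℝ) → ℝ := fun p => (simplexSet 4 1).indicator G (e.symm p) with hΦdef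
  have hΦint : Integrable Φ :=
    (hmp.integrable_comp_emb e.symm.measurableEmbedding).2 hInd
  set g : (Fin 3 → ℝ) → ℝ := fun u => ∫ t, Φ (t, u) with hgdef
  have hΦint' : Integrable Φ (volume.prod volume) := by
    rwa [← Measure.volume_eq_prod]
  have hgint : Integrable g := by
    have := hΦint'.integral_prod_right
    exact this
  have hLHS : (∫ s in simplexSet 4 1, (pd 1 (pd 2 (pd 3 (pd 4 f))) (Fin.cons 0 s)) ^ 2)
      = ∫ u, g u := by
    have e1 : ∀ s : Fin 4 → ℝ, (pd 1 (pd 2 (pd 3 (pd 4 f))) (Fin.cons 0 s)) ^ 2 = G s := by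
      intro s
      rw [← Lmap_apply, h1, hGdef]
      rw [show pd 0 (pd 1 (pd 2 (pd 3 F))) s = pd 3 H s from congrFun hswap s]
    calc (∫ s in simplexSet 4 1, (pd 1 (pd 2 (pd 3 (pd 4 f))) (Fin.cons 0 s)) ^ 2)
        = ∫ s in simplexSet 4 1, G s := by
          exact integral_congr_ae (Filter.Eventually.of_forall (fun s => e1 s))
      _ = ∫ s, (simplexSet 4 1).indicator G s := (integral_indicator hA4m).symm
      _ = ∫ p, (simplexSet 4 1).indicator G (e.symm p) :=
          (hmp.integral_comp e.symm.measurableEmbedding _).symm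
      _ = ∫ p, Φ p ∂(volume.prod volume) := by rw [← Measure.volume_eq_prod]
      _ = ∫ u, ∫ t, Φ (t, u) := integral_prod_symm Φ hΦint'
  -- rewrite the RHS integrand
  set r' : (Fin 3 → ℝ) → ℝ := fun u => (1/(1 - ∑ i, u i)) * (H (Fin.snoc u 0))^2 with hr'def
  have hRHS : (∫ u in simplexSet 3 1, (1 / (1 - (u 0 + u 1 + u 2))) *
      (pd 1 (pd 2 (pd 3 f)) ![0, u 0, u 1, u 2, 0]) ^ 2) = ∫ u, (simplexSet 3 1).indicator r' u := by
    have hptwise : ∀ u : Fin 3 → ℝ, (1 / (1 - (u 0 + u 1 + u 2))) *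
        (pd 1 (pd 2 (pd 3 f)) ![0, u 0, u 1, u 2, 0]) ^ 2 = r' u := by
      intro u
      have hL : ![(0:ℝ), u 0, u 1, u 2, 0] = Lmap 4 (Fin.snoc u 0) := by
        rw [Lmap_apply]
        funext j
        fin_cases j <;> rfl
      rw [hL, k1]
      simp only [hr'def, Fin.sum_univ_three]
    calc (∫ u in simplexSet 3 1, (1 / (1 - (u 0 + u 1 + u 2))) *
          (pd 1 (pd 2 (pd 3 f)) ![0, u 0, u 1, u 2, 0]) ^ 2)
        = ∫ u in simplexSet 3 1, r' u :=
          integral_congr_ae (Filter.Eventually.of_forall (fun u => hptwise u))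
      _ = ∫ u, (simplexSet 3 1).indicator r' u := (integral_indicator hA3m).symm
  rw [hLHS, hRHS, ge_iff_le]
  -- the null set of coordinate hyperplanes
  have hN : volume (⋃ i : Fin 3, {u : Fin 3 → ℝ | u i = 0}) = 0 := by
    refine measure_iUnion_null (fun i => ?_)
    have : {u : Fin 3 → ℝ | u i = 0} = Set.pi Set.univ (fun j => if j = i then {0} else Set.univ) := by
      ext u
      simp only [Set.mem_setOf_eq, Set.mem_pi, Set.mem_univ, forall_true_left]
      constructor
      · intro h j
        by_cases hj : j = i <;> simp [hj, h]
      · intro h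
        have := h i
        simpa using this
    rw [this, volume_pi_pi]
    apply Finset.prod_eq_zero (Finset.mem_univ i)
    simp
  apply integral_mono_of_nonneg
  · apply Filter.Eventually.of_forall
    intro u
    apply Set.indicator_nonneg
    intro v hv
    rw [hr'def]
    apply mul_nonneg _ (sq_nonneg _)
    apply div_nonneg zero_le_one
    have := hv.2
    linarith
  · exact hgint
  · -- the a.e. pointwise comparison
    rw [Filter.EventuallyLE, ae_iff]
    apply measure_mono_null _ hN
    intro u hu
    simp only [Set.mem_setOf_eq, not_le] at hu
    by_contra hmem
    apply hu.not_ge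
    simp only [Set.mem_iUnion, Set.mem_setOf_eq] at hmem
    push_neg at hmem
    -- now hmem : ∀ i, u i ≠ 0; show indicator ≤ g u
    have hgnn : 0 ≤ g u := by
      rw [hgdef]
      apply integral_nonneg
      intro t
      exact Set.indicator_nonneg (fun s _ => sq_nonneg _) _
    by_cases hu3 : u ∈ simplexSet 3 1
    · have hupos : ∀ i, 0 < u i := fun i => lt_of_le_of_ne (hu3.1 i) (Ne.symm (hmem i))
      by_cases hsum1 : ∑ i, u i = 1
      · rw [Set.indicator_of_mem hu3, hr'def]
        simp only [hsum1, sub_self, div_zero, zero_mul]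
        exact hgnn
      · have hsumlt : ∑ i, u i < 1 := lt_of_le_of_ne hu3.2 hsum1
        rw [Set.indicator_of_mem hu3]
        have hcore := core_lemma hH hHO hupos hsumlt
        refine le_trans hcore (le_of_eq ?_)
        -- identify g u with the inner integral
        rw [hgdef]
        simp only
        have hfib : ∀ t : ℝ, Φ (t, u)
            = (Set.Icc (0:ℝ) (1 - ∑ i, u i)).indicator (fun t => G (Fin.snoc u t)) t := by
          intro t
          rw [hΦdef]
          simp only [hesymm (t, u)]
          by_cases ht : t ∈ Set.Icc (0:ℝ) (1 - ∑ i, u i)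
          · rw [Set.indicator_of_mem ht]
            rw [Set.indicator_of_mem]
            constructor
            · intro i
              induction i using Fin.lastCases with
              | last => rw [Fin.snoc_last]; exact ht.1
              | cast i => rw [Fin.snoc_castSucc]; exact hu3.1 i
            · rw [Fin.sum_univ_castSucc]
              simp only [Fin.snoc_castSucc, Fin.snoc_last]
              have := ht.2
              linarith
          · rw [Set.indicator_of_notMem ht, Set.indicator_of_notMem]
            intro hc
            apply ht
            have hsumc := hc.2
            rw [Fin.sum_univ_castSucc] at hsumc
            simp only [Fin.snoc_castSucc, Fin.snoc_last] at hsumc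
            have h0t : 0 ≤ t := by
              have := hc.1 (Fin.last 3)
              rwa [Fin.snoc_last] at this
            exact ⟨h0t, by linarith⟩
        calc ∫ t in Set.Ioc 0 (1 - ∑ i, u i), (pd 3 H (Fin.snoc u t))^2
            = ∫ t in Set.Icc 0 (1 - ∑ i, u i), (pd 3 H (Fin.snoc u t))^2 :=
              (integral_Icc_eq_integral_Ioc).symm
          _ = ∫ t, (Set.Icc (0:ℝ) (1 - ∑ i, u i)).indicator (fun t => G (Fin.snoc u t)) t := by
              rw [integral_indicator measurableSet_Icc]
          _ = ∫ t, Φ (t, u) := by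
              refine integral_congr_ae (Filter.Eventually.of_forall (fun t => ?_))
              exact (hfib t).symm
    · rw [Set.indicator_of_notMem hu3]
      exact hgnn
end

section
/- Let k_0 ≥ 2 be an integer large enough that A := log(2k_0) − 2·log log(2k_0) > 0, and set T := (e^A − 1)/A and γ := (1/A)·(1 − 1/(1 + A·T)). Define F°(t_1, ..., t_{2k_0}) := 1_{Δ_{2k_0}(1)}(t_1, ..., t_{2k_0}) · ∏_{j=1}^{2k_0} 1_{[0,T]}(2k_0 t_j)/(1 + 2k_0 A t_j). Then ∫_{[0,∞)^{2k_0}} F°(t_1, ..., t_{2k_0})^2 dt_1 ··· dt_{2k_0} ≤ γ^{2k_0}/(2k_0)^{2k_0}. -/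
open MeasureTheory

/-- `A k₀ = log (2k₀) - 2 log log (2k₀)`. -/
noncomputable def paperA (k0 : ℕ) : ℝ :=
  Real.log (2 * (k0 : ℝ)) - 2 * Real.log (Real.log (2 * (k0 : ℝ)))

/-- `T k₀ = (e^{A k₀} - 1)/A k₀`. -/
noncomputable def paperT (k0 : ℕ) : ℝ := (Real.exp (paperA k0) - 1) / paperA k0

/-- `γ k₀ = (1/A)(1 - 1/(1 + A T))`. -/
noncomputable def paperGamma (k0 : ℕ) : ℝ :=
  (1 / paperA k0) * (1 - 1 / (1 + paperA k0 * paperT k0))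

/-- `F°(t) = 1_{Δ_{2k₀}(1)}(t) ∏_j 1_{[0,T]}(2k₀ t_j)/(1 + 2k₀ A t_j)`. -/
noncomputable def Fcirc (k0 : ℕ) (t : Fin (2 * k0) → ℝ) : ℝ :=
  Set.indicator (simplexSet (2 * k0) 1) (fun _ => (1 : ℝ)) t *
    ∏ j, Set.indicator (Set.Icc (0 : ℝ) (paperT k0)) (fun _ => (1 : ℝ)) (2 * k0 * t j) /
      (1 + 2 * k0 * paperA k0 * t j)

open Set

/-! Squaring the product of the one-dimensional factors of `F°` gives the product over the
coordinates of `s ↦ 1_{[0, T/(2k₀)]}(s) / (1 + 2k₀ A s)²`, which dominates `(F°)²` once the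
simplex indicator is dropped. Fubini turns its integral into the `2k₀`-th power of a
one-dimensional integral, and `s ↦ s / (1 + b s)` is an antiderivative of `(1 + b s)⁻²`, which
evaluates that integral to `γ / (2k₀)`. -/

theorem integral_Icc_inv_one_add_mul_sq {b c : ℝ} (hc : 0 ≤ c) (hbc : 0 < 1 + b * c) :
    ∫ s in Icc 0 c, ((1 + b * s) ^ 2)⁻¹ = c / (1 + b * c) := by
  have hpos : ∀ s ∈ uIcc 0 c, 0 < 1 + b * s := by
    intro s hs
    rw [uIcc_of_le hc] at hs
    rcases hs.1.eq_or_lt with rfl | hs0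
    · simp
    -- `1 + b s` is a convex combination of its values `1` at `0` and `1 + b c` at `c`.
    have : c * (1 + b * s) = (c - s) + s * (1 + b * c) := by ring
    nlinarith [hs.2, mul_pos hs0 hbc]
  have hderiv : ∀ s ∈ uIcc 0 c,
      HasDerivAt (fun s => s / (1 + b * s)) ((1 + b * s) ^ 2)⁻¹ s := by
    intro s hs
    have hlin : HasDerivAt (fun s : ℝ => 1 + b * s) b s := by
      simpa using ((hasDerivAt_id s).const_mul b).const_add 1
    refine ((hasDerivAt_id' s).div hlin (hpos s hs).ne').congr_deriv ?_
    field_simp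
    ring
  have hint : IntervalIntegrable (fun s : ℝ => ((1 + b * s) ^ 2)⁻¹) volume 0 c :=
    (ContinuousOn.inv₀ (by fun_prop) fun s hs => (pow_pos (hpos s hs) 2).ne').intervalIntegrable
  rw [integral_Icc_eq_integral_Ioc, ← intervalIntegral.integral_of_le hc,
    intervalIntegral.integral_eq_sub_of_hasDerivAt hderiv hint]
  simp

theorem setIntegral_le_integral_pow_of_le_prod {ι : Type*} [Fintype ι] (S : Set (ι → ℝ))
    {f : (ι → ℝ) → ℝ} {g : ℝ → ℝ} (hf : 0 ≤ f) (hg : Integrable g) (hg0 : 0 ≤ g)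
    (hfg : ∀ t, f t ≤ ∏ i, g (t i)) :
    ∫ t in S, f t ≤ (∫ s, g s) ^ Fintype.card ι := by
  have hprod : Integrable (fun t : ι → ℝ => ∏ i, g (t i)) :=
    Integrable.fintype_prod fun _ => hg
  calc ∫ t in S, f t ≤ ∫ t in S, ∏ i, g (t i) :=
        integral_mono_of_nonneg (.of_forall hf) hprod.integrableOn (.of_forall hfg)
    _ ≤ ∫ t : ι → ℝ, ∏ i, g (t i) :=
        setIntegral_le_integral hprod (.of_forall fun t => Finset.prod_nonneg fun i _ => hg0 _)
    _ = (∫ s, g s) ^ Fintype.card ι := by rw [volume_pi, integral_fintype_prod_eq_pow]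

theorem sq_indicator_Icc_const_mul_div {a b T : ℝ} (ha : 0 < a) (s : ℝ) :
    ((Icc 0 T).indicator (fun _ => (1 : ℝ)) (a * s) / (1 + b * s)) ^ 2 =
      (Icc 0 (T / a)).indicator (fun s => ((1 + b * s) ^ 2)⁻¹) s := by
  have hmem : a * s ∈ Icc 0 T ↔ s ∈ Icc 0 (T / a) := by
    rw [← mem_preimage (f := (a * ·)), preimage_const_mul_Icc₀ 0 T ha, zero_div]
  by_cases hs : s ∈ Icc 0 (T / a)
  · simp [indicator_of_mem hs, indicator_of_mem (hmem.2 hs)]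
  · simp [indicator_of_notMem hs, indicator_of_notMem (mt hmem.1 hs)]

theorem paperT_nonneg {k0 : ℕ} (hA : 0 < paperA k0) : 0 ≤ paperT k0 :=
  div_nonneg (by linarith [Real.one_le_exp hA.le]) hA.le

/-- The square `(1_{[0,T]}(2k₀ s) / (1 + 2k₀ A s))²` of a one-dimensional factor of `F°`. -/
noncomputable def FcircFactorSq (k0 : ℕ) : ℝ → ℝ :=
  (Icc 0 (paperT k0 / (2 * k0))).indicator fun s => ((1 + 2 * k0 * paperA k0 * s) ^ 2)⁻¹

theorem FcircFactorSq_nonneg (k0 : ℕ) : 0 ≤ FcircFactorSq k0 :=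
  indicator_nonneg fun _ _ => by positivity

theorem integrable_FcircFactorSq {k0 : ℕ} (hA : 0 ≤ paperA k0) :
    Integrable (FcircFactorSq k0) :=
  (ContinuousOn.integrableOn_Icc (ContinuousOn.inv₀ (by fun_prop) fun s hs => by
    have := hs.1; positivity)).integrable_indicator measurableSet_Icc

theorem integral_FcircFactorSq {k0 : ℕ} (hk : 0 < k0) (hA : 0 < paperA k0) :
    ∫ s, FcircFactorSq k0 s = paperGamma k0 / (2 * k0) := by
  have hT := paperT_nonneg hA
  have hAT : 2 * k0 * paperA k0 * (paperT k0 / (2 * k0)) = paperA k0 * paperT k0 := by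
    field_simp
  rw [FcircFactorSq, integral_indicator measurableSet_Icc,
    integral_Icc_inv_one_add_mul_sq (by positivity) (by rw [hAT]; positivity), hAT, paperGamma]
  field_simp
  ring

theorem Fcirc_sq_le_prod {k0 : ℕ} (hk : 0 < k0) (t : Fin (2 * k0) → ℝ) :
    Fcirc k0 t ^ 2 ≤ ∏ j, FcircFactorSq k0 (t j) := by
  have h2k : (0 : ℝ) < 2 * k0 := by positivity
  rw [Fcirc, mul_pow, ← Finset.prod_pow]
  simp_rw [sq_indicator_Icc_const_mul_div h2k]
  refine mul_le_of_le_one_left (Finset.prod_nonneg fun j _ => FcircFactorSq_nonneg k0 _) ?_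
  exact pow_le_one₀ (indicator_nonneg (fun _ _ => zero_le_one) t)
    (indicator_le_self' (fun _ _ => zero_le_one) t)

/-- Maynard's upper bound: `∫ (F°)² ≤ γ^{2k₀}/(2k₀)^{2k₀}`. -/
theorem Fcirc_sq_integral_le (k0 : ℕ) (hk0 : 2 ≤ k0) (hA : 0 < paperA k0) :
    (∫ t in {t : Fin (2 * k0) → ℝ | ∀ i, 0 ≤ t i}, (Fcirc k0 t) ^ 2) ≤
      paperGamma k0 ^ (2 * k0) / (2 * (k0 : ℝ)) ^ (2 * k0) := by
  have hk : 0 < k0 := by omega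
  calc _ ≤ (∫ s, FcircFactorSq k0 s) ^ Fintype.card (Fin (2 * k0)) :=
        setIntegral_le_integral_pow_of_le_prod _ (fun t => sq_nonneg _)
          (integrable_FcircFactorSq hA.le) (FcircFactorSq_nonneg k0) (Fcirc_sq_le_prod hk)
    _ = _ := by rw [integral_FcircFactorSq hk hA, Fintype.card_fin, div_pow]
end

section
/- Let 1/2 < θ_0 < 2/3 and let k_0 ≥ 2 be an integer with A := log(2k_0) − 2·log log(2k_0) > 0; set T := (e^A − 1)/A and γ := (1/A)·(1 − 1/(1 + A·T)). Let h_1 : [0,∞)^{2k_0} → ℝ be smooth with |h_1| ≤ 1 and h_1 = 0 outside Δ_{2k_0}(1), and let h_2* : [0,∞) → ℝ be smooth with |h_2*| ≤ 1 and h_2* = 0 on (T, ∞). Define I_3 := ∫_{Δ_{2k_0-1}(2/(3θ_0))} ( t_2 / (2/(3θ_0) − t_2 − ··· − t_{2k_0}) ) · ( ∫_0^∞ h_1(t_1, ..., t_{2k_0}) · (2k_0·A·h_2*(2k_0 t_2)/(1 + 2k_0 A t_2)^2) · ∏_{i ≠ 2} h_2*(2k_0 t_i)/(1 + 2k_0 A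 t_i) dt_1 )^2 dt_2 ··· dt_{2k_0}. Then I_3 ≤ (1/6) · (1/(2/(3θ_0) − 1)) · γ^{2k_0-2}/(2k_0)^{2k_0}. -/
open MeasureTheory

/- ### Auxiliary material -/

lemma aux_T1 (k0 : ℕ) (hk : 2 ≤ k0) : 0 < 2*k0-1 := by omega

lemma aux_T2 (k0 : ℕ) (hk : 2 ≤ k0) : 1 < 2*k0 := by omega

lemma aux_T3 (k0 : ℕ) (i : Fin (2*k0)) (hi : 0 < (i:ℕ)) : (i:ℕ) - 1 < 2*k0-1 := by
  have := i.isLt; omega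

lemma hasDerivAt_lin (B : ℝ) (x : ℝ) : HasDerivAt (fun x : ℝ => 1 + B * x) B x := by
  simpa using ((hasDerivAt_id x).const_mul B).const_add 1

lemma l1 {B b : ℝ} (hB : 0 < B) (hb : 0 ≤ b) :
    ∫ x in (0:ℝ)..b, (1 + B * x)⁻¹ = Real.log (1 + B * b) / B := by
  have hne : ∀ x ∈ Set.uIcc (0:ℝ) b, 1 + B * x ≠ 0 := by
    intro x hx
    rw [Set.uIcc_of_le hb] at hx
    nlinarith [hx.1]
  have hcont : ContinuousOn (fun x : ℝ => (1 + B * x)⁻¹) (Set.uIcc 0 b) :=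
    ContinuousOn.inv₀ (by fun_prop) hne
  rw [intervalIntegral.integral_eq_sub_of_hasDerivAt (f := fun x => Real.log (1 + B * x) / B)
    (fun x hx => by
      have := ((hasDerivAt_lin B x).log (hne x hx)).div_const B
      convert this using 1
      case e'_9 =>
        have h0 := hne x hx
        have hB0 := hB.ne'
        field_simp
      all_goals rfl)
    hcont.intervalIntegrable]
  simp [hB.ne']

lemma l2 {B b : ℝ} (hB : 0 < B) (hb : 0 ≤ b) :
    ∫ x in (0:ℝ)..b, ((1 + B * x)⁻¹) ^ 2 = (1 / B) * (1 - (1 + B * b)⁻¹) := by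
  have hne : ∀ x ∈ Set.uIcc (0:ℝ) b, 1 + B * x ≠ 0 := by
    intro x hx
    rw [Set.uIcc_of_le hb] at hx
    nlinarith [hx.1]
  have hcont : ContinuousOn (fun x : ℝ => ((1 + B * x)⁻¹) ^ 2) (Set.uIcc 0 b) :=
    (ContinuousOn.inv₀ (by fun_prop) hne).pow 2
  rw [intervalIntegral.integral_eq_sub_of_hasDerivAt (f := fun x => -(1 + B * x)⁻¹ / B)
    (fun x hx => by
      have := (((hasDerivAt_lin B x).inv (hne x hx)).neg).div_const B
      convert this using 1
      case e'_9 =>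
        have h0 := hne x hx
        have hB0 := hB.ne'
        field_simp
      all_goals rfl)
    hcont.intervalIntegrable]
  field_simp
  ring

lemma l3 {B b : ℝ} (hB : 0 < B) (hb : 0 ≤ b) :
    ∫ x in (0:ℝ)..b, B ^ 2 * x * ((1 + B * x)⁻¹) ^ 4 ≤ 1 / 6 := by
  have hne : ∀ x ∈ Set.uIcc (0:ℝ) b, 1 + B * x ≠ 0 := by
    intro x hx
    rw [Set.uIcc_of_le hb] at hx
    nlinarith [hx.1]
  have key : ∫ x in (0:ℝ)..b, B ^ 2 * x * ((1 + B * x)⁻¹) ^ 4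
      = (-((1 + B * b) ^ 2)⁻¹ / 2 + ((1 + B * b) ^ 3)⁻¹ / 3) - (-(1:ℝ)/2 + 1/3) := by
    rw [intervalIntegral.integral_eq_sub_of_hasDerivAt
      (f := fun x => -((1 + B * x) ^ 2)⁻¹ / 2 + ((1 + B * x) ^ 3)⁻¹ / 3)
      (fun x hx => by
        have h2 := ((((hasDerivAt_lin B x).pow 2).inv (pow_ne_zero 2 (hne x hx))).neg).div_const 2
        have h3 := (((hasDerivAt_lin B x).pow 3).inv (pow_ne_zero 3 (hne x hx))).div_const 3
        have := h2.add h3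
        convert this using 1
        have h0 := hne x hx
        case e'_9 =>
          simp only [Pi.pow_apply]
          norm_num
          field_simp
          ring
        all_goals rfl)
      (by
        apply ContinuousOn.intervalIntegrable
        exact (continuousOn_const.mul continuousOn_id).mul
          (((continuousOn_const.add (continuousOn_const.mul continuousOn_id)).inv₀ hne).pow 4))]
    norm_num
  rw [key]
  have h1 : (1:ℝ) ≤ 1 + B * b := by nlinarith
  have h2 : (0:ℝ) < (1 + B * b) ^ 2 := by positivity
  have h3 : (0:ℝ) < (1 + B * b) ^ 3 := by positivity
  have hle : ((1 + B * b) ^ 3)⁻¹ / 3 ≤ ((1 + B * b) ^ 2)⁻¹ / 2 := by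
    rw [div_le_div_iff₀ (by norm_num) (by norm_num)]
    rw [inv_mul_le_iff₀ h3]
    have : ((1 + B * b) ^ 2)⁻¹ * (1 + B*b)^2 = 1 := inv_mul_cancel₀ h2.ne'
    nlinarith [inv_nonneg.mpr h2.le]
  linarith

lemma ind_eq {b : ℝ} (hb : 0 ≤ b) (h : ℝ → ℝ) :
    ∫ x, Set.indicator (Set.Icc 0 b) h x = ∫ x in (0:ℝ)..b, h x := by
  rw [MeasureTheory.integral_indicator measurableSet_Icc,
    MeasureTheory.integral_Icc_eq_integral_Ioc, ← intervalIntegral.integral_of_le hb]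

lemma ind_eq_Ioi {b : ℝ} (hb : 0 ≤ b) (h : ℝ → ℝ) :
    ∫ x in Set.Ioi (0:ℝ), Set.indicator (Set.Icc 0 b) h x = ∫ x in (0:ℝ)..b, h x := by
  rw [MeasureTheory.setIntegral_indicator measurableSet_Icc]
  have : Set.Ioi (0:ℝ) ∩ Set.Icc 0 b = Set.Ioc 0 b := by
    ext x
    simp only [Set.mem_inter_iff, Set.mem_Ioi, Set.mem_Icc, Set.mem_Ioc]
    constructor
    · rintro ⟨h1, _, h3⟩; exact ⟨h1, h3⟩
    · rintro ⟨h1, h3⟩; exact ⟨h1, h1.le, h3⟩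
  rw [this, ← intervalIntegral.integral_of_le hb]

lemma ind_integrable {b : ℝ} (h : ℝ → ℝ)
    (hc : ContinuousOn h (Set.Icc 0 b)) :
    Integrable (Set.indicator (Set.Icc 0 b) h) := by
  rw [integrable_indicator_iff measurableSet_Icc]
  exact hc.integrableOn_Icc

lemma fin_sum_eq (k0 : ℕ) (hk : 2 ≤ k0) (f : Fin (2*k0) → ℝ) :
    ∑ i, f i = f ⟨0, by omega⟩ + ∑ j : Fin (2*k0-1), f ⟨(j:ℕ)+1, by omega⟩ := by
  rw [← Finset.add_sum_erase Finset.univ f (Finset.mem_univ ⟨0, by omega⟩)]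
  congr 1
  refine Finset.sum_nbij' (fun i => (⟨(i:ℕ)-1, by have := i.isLt; omega⟩ : Fin (2*k0-1)))
    (fun j => (⟨(j:ℕ)+1, by have := j.isLt; omega⟩ : Fin (2*k0))) ?_ ?_ ?_ ?_ ?_
  · intro a ha; simp
  · intro a ha
    simp only [Finset.mem_erase, Finset.mem_univ, and_true, ne_eq, Fin.ext_iff, Fin.val_mk] at ha ⊢
    omega
  · intro a ha
    simp only [Finset.mem_erase, Finset.mem_univ, and_true, ne_eq, Fin.ext_iff, Fin.val_mk] at ha
    apply Fin.ext
    simp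
    omega
  · intro a ha
    apply Fin.ext
    simp
  · intro a ha
    simp only [Finset.mem_erase, Finset.mem_univ, and_true, ne_eq, Fin.ext_iff, Fin.val_mk] at ha
    congr 1
    apply Fin.ext
    simp
    omega

lemma fin_prod_erase (k0 : ℕ) (hk : 2 ≤ k0) (f : Fin (2*k0) → ℝ) :
    ∏ i ∈ Finset.univ.erase (⟨1, aux_T2 k0 hk⟩ : Fin (2*k0)), f i
      = f ⟨0, by omega⟩ *
        ∏ j ∈ Finset.univ.erase (⟨0, aux_T1 k0 hk⟩ : Fin (2*k0-1)), f ⟨(j:ℕ)+1, by omega⟩ := by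
  have h0mem : (⟨0, by omega⟩ : Fin (2*k0)) ∈ Finset.univ.erase (⟨1, by omega⟩ : Fin (2*k0)) := by
    simp [Finset.mem_erase, Fin.ext_iff]
  rw [← Finset.mul_prod_erase _ f h0mem]
  congr 1
  refine Finset.prod_nbij' (fun i => (⟨(i:ℕ)-1, by have := i.isLt; omega⟩ : Fin (2*k0-1)))
    (fun j => (⟨(j:ℕ)+1, by have := j.isLt; omega⟩ : Fin (2*k0))) ?_ ?_ ?_ ?_ ?_
  · intro a ha
    simp only [Finset.mem_erase, Finset.mem_univ, and_true, ne_eq, Fin.ext_iff, Fin.val_mk] at ha ⊢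
    omega
  · intro a ha
    simp only [Finset.mem_erase, Finset.mem_univ, and_true, ne_eq, Fin.ext_iff, Fin.val_mk] at ha ⊢
    omega
  · intro a ha
    simp only [Finset.mem_erase, Finset.mem_univ, and_true, ne_eq, Fin.ext_iff, Fin.val_mk] at ha
    apply Fin.ext
    simp
    omega
  · intro a ha
    apply Fin.ext
    simp
  · intro a ha
    simp only [Finset.mem_erase, Finset.mem_univ, and_true, ne_eq, Fin.ext_iff, Fin.val_mk] at ha
    congr 1
    apply Fin.ext
    simp
    omega

/-- Reconstruction of the full vector from outer variables `s` and inner variable `u`. -/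
def vecAux (k0 : ℕ) (s : Fin (2*k0-1) → ℝ) (u : ℝ) : Fin (2*k0) → ℝ :=
  fun i => if hi : 0 < (i : ℕ) then s ⟨(i : ℕ) - 1, aux_T3 k0 i hi⟩ else u

lemma vecAux_zero (k0 : ℕ) (hk : 2 ≤ k0) (s : Fin (2*k0-1) → ℝ) (u : ℝ) :
    vecAux k0 s u ⟨0, by omega⟩ = u := rfl

lemma vecAux_one (k0 : ℕ) (hk : 2 ≤ k0) (s : Fin (2*k0-1) → ℝ) (u : ℝ) :
    vecAux k0 s u ⟨1, aux_T2 k0 hk⟩ = s ⟨0, aux_T1 k0 hk⟩ := rfl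

lemma vecAux_succ (k0 : ℕ) (hk : 2 ≤ k0) (s : Fin (2*k0-1) → ℝ) (u : ℝ) (j : Fin (2*k0-1)) :
    vecAux k0 s u ⟨(j:ℕ)+1, by have := j.isLt; omega⟩ = s j := by
  simp only [vecAux, Nat.add_sub_cancel, dif_pos (Nat.succ_pos _)]

lemma vecAux_nonneg (k0 : ℕ) {s : Fin (2*k0-1) → ℝ} {u : ℝ}
    (hs : ∀ j, 0 ≤ s j) (hu : 0 ≤ u) : ∀ i, 0 ≤ vecAux k0 s u i := by
  intro i
  unfold vecAux
  split
  · exact hs _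
  · exact hu

lemma vecAux_sum (k0 : ℕ) (hk : 2 ≤ k0) (s : Fin (2*k0-1) → ℝ) (u : ℝ) :
    ∑ i, vecAux k0 s u i = u + ∑ j, s j := by
  rw [fin_sum_eq k0 hk]
  rw [vecAux_zero k0 hk]
  congr 1

/-- The inner integrand. -/
noncomputable def innF (k0 : ℕ) (hk : 2 ≤ k0) (h1 : (Fin (2*k0) → ℝ) → ℝ) (h2 : ℝ → ℝ)
    (s : Fin (2*k0-1) → ℝ) (u : ℝ) : ℝ :=
  h1 (vecAux k0 s u) *
    (2 * k0 * paperA k0 * h2 (2 * k0 * vecAux k0 s u ⟨1, aux_T2 k0 hk⟩) /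
      (1 + 2 * k0 * paperA k0 * vecAux k0 s u ⟨1, aux_T2 k0 hk⟩) ^ 2) *
    ∏ i ∈ Finset.univ.erase (⟨1, aux_T2 k0 hk⟩ : Fin (2*k0)),
      h2 (2 * k0 * vecAux k0 s u i) / (1 + 2 * k0 * paperA k0 * vecAux k0 s u i)

/-- The outer integrand. -/
noncomputable def outF (θ0 : ℝ) (k0 : ℕ) (hk : 2 ≤ k0) (h1 : (Fin (2*k0) → ℝ) → ℝ) (h2 : ℝ → ℝ)
    (s : Fin (2*k0-1) → ℝ) : ℝ :=
  (s ⟨0, aux_T1 k0 hk⟩ / (2 / (3 * θ0) - ∑ i, s i)) *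
    (∫ u in Set.Ioi (0:ℝ), innF k0 hk h1 h2 s u) ^ 2

set_option maxHeartbeats 2000000 in
/-- Estimate for `I₃`.  The outer variables `(t₂, …, t_{2k₀})` are represented by
`s : Fin (2k₀ - 1) → ℝ` and the inner variable `t₁` by `u`; the full vector
`(t₁, …, t_{2k₀})` is reconstructed accordingly.  The convention that the outer
integrand vanishes when `t₂ + ⋯ + t_{2k₀} = 2/(3θ₀)` is automatic since in Lean
`x/0 = 0`. -/
theorem I3_bound (θ0 : ℝ) (hθ1 : 1 / 2 < θ0) (hθ2 : θ0 < 2 / 3)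
    (k0 : ℕ) (hk0 : 2 ≤ k0) (hA : 0 < paperA k0)
    (h1 : (Fin (2 * k0) → ℝ) → ℝ) (h2 : ℝ → ℝ)
    (hs1 : ContDiff ℝ (⊤ : ℕ∞) h1) (hs2 : ContDiff ℝ (⊤ : ℕ∞) h2)
    (hb1 : ∀ t, (∀ i, 0 ≤ t i) → |h1 t| ≤ 1)
    (hz1 : ∀ t, (∀ i, 0 ≤ t i) → 1 < ∑ i, t i → h1 t = 0)
    (hb2 : ∀ u : ℝ, 0 ≤ u → |h2 u| ≤ 1)
    (hz2 : ∀ u : ℝ, paperT k0 < u → h2 u = 0) :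
    (∫ s in simplexSet (2 * k0 - 1) (2 / (3 * θ0)),
        (s ⟨0, by omega⟩ / (2 / (3 * θ0) - ∑ i, s i)) *
          (∫ u in Set.Ioi (0 : ℝ),
            (fun t : Fin (2 * k0) → ℝ =>
              h1 t *
                (2 * k0 * paperA k0 * h2 (2 * k0 * t ⟨1, by omega⟩) /
                  (1 + 2 * k0 * paperA k0 * t ⟨1, by omega⟩) ^ 2) *
                ∏ i ∈ Finset.univ.erase (⟨1, by omega⟩ : Fin (2 * k0)),
                  h2 (2 * k0 * t i) / (1 + 2 * k0 * paperA k0 * t i))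
            (fun i => if hi : 0 < (i : ℕ) then s ⟨(i : ℕ) - 1, by have := i.isLt; omega⟩
              else u)) ^ 2) ≤
      (1 / 6) * (1 / (2 / (3 * θ0) - 1)) *
        (paperGamma k0 ^ (2 * k0 - 2) / (2 * (k0 : ℝ)) ^ (2 * k0)) := by
  -- Notation and basic facts
  have hθ0 : (0:ℝ) < θ0 := by linarith
  have hk0R : (2:ℝ) ≤ (k0:ℝ) := by exact_mod_cast hk0
  have hk0pos : (0:ℝ) < (k0:ℝ) := by linarith
  set A : ℝ := paperA k0 with hA_def
  set B : ℝ := 2 * (k0:ℝ) * A with hB_def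
  have hB : 0 < B := by positivity
  have hT : 0 < paperT k0 := by
    unfold paperT
    apply div_pos _ hA
    have : (1:ℝ) < Real.exp (paperA k0) := Real.one_lt_exp_iff.mpr hA
    linarith
  set b : ℝ := paperT k0 / (2 * (k0:ℝ)) with hb_def
  have hb : 0 < b := by positivity
  set c : ℝ := 2 / (3 * θ0) with hc_def
  have hc : 1 < c := by
    rw [hc_def, lt_div_iff₀ (by positivity)]
    linarith
  have hc1 : 0 < c - 1 := by linarith
  have hBb : B * b = A * paperT k0 := by
    rw [hB_def, hb_def]
    field_simp
  have hexp : 1 + B * b = Real.exp A := by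
    rw [hBb]
    unfold paperT
    rw [← hA_def, mul_div_assoc', mul_div_cancel_left₀ _ hA.ne']
    ring
  have h2k0b : 2 * (k0:ℝ) * b = paperT k0 := by
    rw [hb_def]
    field_simp
  -- the distinguished indices
  set z : Fin (2*k0-1) := ⟨0, by omega⟩ with hz_def
  -- one–dimensional bounding functions
  set q : ℝ → ℝ := Set.indicator (Set.Icc 0 b) (fun y => (1 + B * y)⁻¹) with hq_def
  set g1 : ℝ → ℝ := Set.indicator (Set.Icc 0 b) (fun y => ((1 + B * y)⁻¹) ^ 2) with hg1_def
  set g0 : ℝ → ℝ := Set.indicator (Set.Icc 0 b) (fun y => B ^ 2 * y * ((1 + B * y)⁻¹) ^ 4)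
    with hg0_def
  have hone_add : ∀ y : ℝ, y ∈ Set.Icc 0 b → (0:ℝ) < 1 + B * y := by
    intro y hy
    nlinarith [hy.1]
  have hq_nonneg : ∀ x, 0 ≤ q x := by
    intro x
    apply Set.indicator_nonneg
    intro y hy
    exact (inv_nonneg.mpr (hone_add y hy).le)
  have hg1_nonneg : ∀ x, 0 ≤ g1 x := by
    intro x
    apply Set.indicator_nonneg
    intro y hy
    positivity
  have hg0_nonneg : ∀ x, 0 ≤ g0 x := by
    intro x
    apply Set.indicator_nonneg
    intro y hy
    have := hy.1
    positivity
  have hcont_ne : ∀ y ∈ Set.Icc (0:ℝ) b, 1 + B * y ≠ 0 := fun y hy => (hone_add y hy).ne'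
  have hq_int : Integrable q := by
    rw [hq_def]
    exact ind_integrable _ (ContinuousOn.inv₀ (by fun_prop) hcont_ne)
  have hg1_int : Integrable g1 := by
    rw [hg1_def]
    exact ind_integrable _ ((ContinuousOn.inv₀ (by fun_prop) hcont_ne).pow 2)
  have hg0_int : Integrable g0 := by
    rw [hg0_def]
    exact ind_integrable _ ((continuousOn_const.mul continuousOn_id).mul
      ((ContinuousOn.inv₀ (by fun_prop) hcont_ne).pow 4))
  -- values of the 1d integrals
  have hq_val : ∫ u in Set.Ioi (0:ℝ), q u = 1 / (2 * (k0:ℝ)) := by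
    rw [hq_def, ind_eq_Ioi hb.le, l1 hB hb.le, hexp, Real.log_exp, hB_def]
    field_simp
  have hg1_val : ∫ x, g1 x = paperGamma k0 / (2 * (k0:ℝ)) := by
    rw [hg1_def, ind_eq hb.le, l2 hB hb.le]
    unfold paperGamma
    rw [← hA_def, ← hBb, hB_def]
    have h1Bb : (0:ℝ) < 1 + B * b := by nlinarith
    rw [hB_def] at h1Bb
    field_simp
  have hg0_val : ∫ x, g0 x ≤ 1 / 6 := by
    rw [hg0_def, ind_eq hb.le]
    exact l3 hB hb.le
  have hq_int_nonneg : 0 ≤ ∫ u in Set.Ioi (0:ℝ), q u := by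
    rw [hq_val]; positivity
  have hg1_int_nonneg : 0 ≤ ∫ x, g1 x :=
    integral_nonneg hg1_nonneg
  have hg0_int_nonneg : 0 ≤ ∫ x, g0 x :=
    integral_nonneg hg0_nonneg
  -- the bounding function G
  set C : ℝ := (1 / (c - 1)) * (1 / (2 * (k0:ℝ))) ^ 2 with hC_def
  have hC_nonneg : 0 ≤ C := by positivity
  set G : (Fin (2*k0-1) → ℝ) → ℝ :=
    fun s => C * ∏ j : Fin (2*k0-1), (if (j:ℕ) = 0 then g0 else g1) (s j) with hG_def
  have hG_nonneg : ∀ s, 0 ≤ G s := by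
    intro s
    apply mul_nonneg hC_nonneg
    apply Finset.prod_nonneg
    intro j _
    by_cases hj : (j:ℕ) = 0
    · simp only [hj, if_pos]
      exact hg0_nonneg _
    · simp only [hj, if_neg, if_false]
      exact hg1_nonneg _
  have hG_int : Integrable G := by
    apply Integrable.const_mul
    exact Integrable.fintype_prod (f := fun j : Fin (2*k0-1) => if (j:ℕ) = 0 then g0 else g1)
      (fun j => by by_cases hj : (j:ℕ) = 0 <;> simp [hj, hq_int, hg0_int, hg1_int])
  -- the simplex is measurable
  have hS : MeasurableSet (simplexSet (2*k0-1) c) := by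
    have : simplexSet (2*k0-1) c
        = (⋂ i, {t : Fin (2*k0-1) → ℝ | 0 ≤ t i}) ∩ {t | (∑ i, t i) ≤ c} := by
      ext t
      simp [simplexSet, Set.mem_iInter]
    rw [this]
    exact (MeasurableSet.iInter fun i =>
        measurableSet_le measurable_const (measurable_pi_apply i)).inter
      (measurableSet_le (Finset.measurable_sum _ fun i _ => measurable_pi_apply i)
        measurable_const)
  -- measurability of the outer integrand
  have hvecMeas : Measurable (fun p : (Fin (2*k0-1) → ℝ) × ℝ => vecAux k0 p.1 p.2) := by
    apply measurable_pi_lambda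
    intro i
    by_cases hi : 0 < (i:ℕ)
    · simp only [vecAux, dif_pos hi]
      exact (measurable_pi_apply _).comp measurable_fst
    · simp only [vecAux, dif_neg hi]
      exact measurable_snd
  have hcoord : ∀ i : Fin (2*k0),
      Measurable (fun p : (Fin (2*k0-1) → ℝ) × ℝ => vecAux k0 p.1 p.2 i) :=
    fun i => (measurable_pi_apply i).comp hvecMeas
  have hphiMeas : Measurable (fun p : (Fin (2*k0-1) → ℝ) × ℝ => innF k0 hk0 h1 h2 p.1 p.2) := by
    unfold innF
    apply Measurable.mul
    apply Measurable.mul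
    · exact hs1.continuous.measurable.comp hvecMeas
    · exact (measurable_const.mul
        (hs2.continuous.measurable.comp (measurable_const.mul (hcoord _)))).div
        ((measurable_const.add (measurable_const.mul (hcoord _))).pow_const 2)
    · apply Finset.measurable_prod
      intro i _
      exact (hs2.continuous.measurable.comp (measurable_const.mul (hcoord i))).div
        (measurable_const.add (measurable_const.mul (hcoord i)))
  have hinnerMeas : StronglyMeasurable
      (fun s : Fin (2*k0-1) → ℝ => ∫ u in Set.Ioi (0:ℝ), innF k0 hk0 h1 h2 s u) :=
    StronglyMeasurable.integral_prod_right' (hphiMeas.stronglyMeasurable)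
  have houtMeas : Measurable (outF θ0 k0 hk0 h1 h2) := by
    unfold outF
    apply Measurable.mul
    · exact (measurable_pi_apply _).div
        (measurable_const.sub (Finset.measurable_sum _ fun i _ => measurable_pi_apply i))
    · exact (hinnerMeas.measurable).pow_const 2
  -- pointwise bound on the inner integrand factors
  have hfac : ∀ x : ℝ, 0 ≤ x → |h2 (2 * (k0:ℝ) * x) / (1 + B * x)| ≤ q x := by
    intro x hx
    by_cases hxb : x ∈ Set.Icc 0 b
    · have hpos := hone_add x hxb
      rw [hq_def, Set.indicator_of_mem hxb, abs_div, abs_of_pos hpos, div_le_iff₀ hpos,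
        inv_mul_cancel₀ hpos.ne']
      exact hb2 _ (by positivity)
    · have hxb' : b < x := by
        simp only [Set.mem_Icc, not_and, not_le] at hxb
        exact hxb hx
      have : h2 (2 * (k0:ℝ) * x) = 0 := by
        apply hz2
        rw [← h2k0b]
        have : (0:ℝ) < 2 * (k0:ℝ) := by positivity
        nlinarith
      rw [hq_def, Set.indicator_of_notMem hxb, this]
      simp
  have hmid : ∀ x : ℝ, 0 ≤ x →
      |B * h2 (2 * (k0:ℝ) * x) / (1 + B * x) ^ 2| ≤ B * g1 x := by
    intro x hx
    by_cases hxb : x ∈ Set.Icc 0 b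
    · have hpos := hone_add x hxb
      have hpos2 : (0:ℝ) < (1 + B * x) ^ 2 := by positivity
      rw [hg1_def, Set.indicator_of_mem hxb, abs_div, abs_of_pos hpos2, div_le_iff₀ hpos2]
      have hh2 : |h2 (2 * (k0:ℝ) * x)| ≤ 1 := hb2 _ (by positivity)
      rw [abs_mul, abs_of_pos hB]
      have : ((1 + B * x)⁻¹) ^ 2 * (1 + B * x) ^ 2 = 1 := by
        field_simp
      nlinarith [abs_nonneg (h2 (2 * (k0:ℝ) * x))]
    · have hxb' : b < x := by
        simp only [Set.mem_Icc, not_and, not_le] at hxb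
        exact hxb hx
      have : h2 (2 * (k0:ℝ) * x) = 0 := by
        apply hz2
        rw [← h2k0b]
        have : (0:ℝ) < 2 * (k0:ℝ) := by positivity
        nlinarith
      rw [hg1_def, Set.indicator_of_notMem hxb, this]
      simp
  -- the s-dependent part of the inner bound
  set K : (Fin (2*k0-1) → ℝ) → ℝ :=
    fun s => B * g1 (s z) * ∏ j ∈ Finset.univ.erase z, q (s j) with hK_def
  have hK_nonneg : ∀ s, 0 ≤ K s := by
    intro s
    apply mul_nonneg (mul_nonneg hB.le (hg1_nonneg _))
    exact Finset.prod_nonneg fun j _ => hq_nonneg _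
  -- inner integral bound, for s in the simplex
  have hInner : ∀ s ∈ simplexSet (2*k0-1) c,
      |∫ u in Set.Ioi (0:ℝ), innF k0 hk0 h1 h2 s u| ≤ K s * (1 / (2 * (k0:ℝ))) := by
    intro s hs
    obtain ⟨hs0, _⟩ := hs
    have hbd : ∀ᵐ u ∂(volume.restrict (Set.Ioi (0:ℝ))),
        ‖innF k0 hk0 h1 h2 s u‖ ≤ K s * q u := by
      rw [ae_restrict_iff' measurableSet_Ioi]
      filter_upwards with u hu
      have hu0 : (0:ℝ) ≤ u := (Set.mem_Ioi.mp hu).le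
      have htnn : ∀ i, 0 ≤ vecAux k0 s u i := vecAux_nonneg k0 hs0 hu0
      rw [Real.norm_eq_abs]
      unfold innF
      rw [abs_mul, abs_mul]
      have e1 : |h1 (vecAux k0 s u)| ≤ 1 := hb1 _ htnn
      have e2 : |2 * (k0:ℝ) * paperA k0 * h2 (2 * k0 * vecAux k0 s u ⟨1, by omega⟩) /
          (1 + 2 * k0 * paperA k0 * vecAux k0 s u ⟨1, by omega⟩) ^ 2| ≤ B * g1 (s z) := by
        rw [vecAux_one k0 hk0]
        have := hmid (s ⟨0, by omega⟩) (hs0 _)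
        rw [hB_def]
        rw [hB_def] at this
        exact this
      have e3 : |∏ i ∈ Finset.univ.erase (⟨1, by omega⟩ : Fin (2*k0)),
          h2 (2 * k0 * vecAux k0 s u i) / (1 + 2 * k0 * paperA k0 * vecAux k0 s u i)|
          ≤ q u * ∏ j ∈ Finset.univ.erase z, q (s j) := by
        rw [Finset.abs_prod]
        rw [fin_prod_erase k0 hk0
          (fun i => |h2 (2 * k0 * vecAux k0 s u i) / (1 + 2 * k0 * paperA k0 * vecAux k0 s u i)|)]
        apply mul_le_mul
        · rw [vecAux_zero k0 hk0]
          have := hfac u hu0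
          rw [hB_def] at this
          exact this
        · apply Finset.prod_le_prod (fun j _ => abs_nonneg _)
          intro j _
          rw [vecAux_succ k0 hk0]
          have := hfac (s j) (hs0 j)
          rw [hB_def] at this
          exact this
        · exact Finset.prod_nonneg fun j _ => abs_nonneg _
        · exact hq_nonneg u
      calc |h1 (vecAux k0 s u)| *
            |2 * (k0:ℝ) * paperA k0 * h2 (2 * k0 * vecAux k0 s u ⟨1, by omega⟩) /
              (1 + 2 * k0 * paperA k0 * vecAux k0 s u ⟨1, by omega⟩) ^ 2| *
            |∏ i ∈ Finset.univ.erase (⟨1, by omega⟩ : Fin (2*k0)),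
              h2 (2 * k0 * vecAux k0 s u i) / (1 + 2 * k0 * paperA k0 * vecAux k0 s u i)|
          ≤ 1 * (B * g1 (s z)) * (q u * ∏ j ∈ Finset.univ.erase z, q (s j)) := by
            apply mul_le_mul
            apply mul_le_mul e1 e2 (abs_nonneg _) (by norm_num)
            exact e3
            exact abs_nonneg _
            exact mul_nonneg (by norm_num) (mul_nonneg hB.le (hg1_nonneg _))
        _ = K s * q u := by rw [hK_def]; ring
    have hKq_int : Integrable (fun u => K s * q u) (volume.restrict (Set.Ioi (0:ℝ))) :=
      (hq_int.restrict.const_mul _)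
    calc |∫ u in Set.Ioi (0:ℝ), innF k0 hk0 h1 h2 s u|
        ≤ ∫ u in Set.Ioi (0:ℝ), K s * q u :=
          norm_integral_le_of_norm_le hKq_int hbd
      _ = K s * ∫ u in Set.Ioi (0:ℝ), q u := integral_const_mul _ _
      _ = K s * (1 / (2 * (k0:ℝ))) := by rw [hq_val]
  -- vanishing of the inner integral when the outer sum exceeds 1
  have hInnerZero : ∀ s ∈ simplexSet (2*k0-1) c, 1 < ∑ j, s j →
      (∫ u in Set.Ioi (0:ℝ), innF k0 hk0 h1 h2 s u) = 0 := by
    intro s hs hsum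
    apply setIntegral_eq_zero_of_forall_eq_zero
    intro u hu
    have hu0 : (0:ℝ) ≤ u := (Set.mem_Ioi.mp hu).le
    have htnn : ∀ i, 0 ≤ vecAux k0 s u i := vecAux_nonneg k0 hs.1 hu0
    have htsum : 1 < ∑ i, vecAux k0 s u i := by
      rw [vecAux_sum k0 hk0]
      linarith
    unfold innF
    rw [hz1 _ htnn htsum]
    ring
  -- the pointwise comparison on the simplex
  have hPoint : ∀ s ∈ simplexSet (2*k0-1) c, outF θ0 k0 hk0 h1 h2 s ≤ G s := by
    intro s hs
    obtain ⟨hs0, hssum⟩ := hs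
    by_cases hcase : 1 < ∑ j, s j
    · unfold outF
      rw [hInnerZero s ⟨hs0, hssum⟩ hcase]
      rw [← hc_def]
      simpa using hG_nonneg s
    · push_neg at hcase
      unfold outF
      rw [← hc_def]
      have hIb := hInner s ⟨hs0, hssum⟩
      have hIsq : (∫ u in Set.Ioi (0:ℝ), innF k0 hk0 h1 h2 s u) ^ 2
          ≤ (K s * (1 / (2 * (k0:ℝ)))) ^ 2 := by
        rw [← sq_abs]
        apply pow_le_pow_left₀ (abs_nonneg _) hIb
      have hfrac : s ⟨0, by omega⟩ / (c - ∑ i, s i) ≤ s z / (c - 1) := by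
        rw [hz_def]
        apply div_le_div_of_nonneg_left (hs0 _) hc1
        linarith
      have hfrac_nonneg : 0 ≤ s ⟨0, by omega⟩ / (c - ∑ i, s i) := by
        apply div_nonneg (hs0 _)
        linarith
      calc (s ⟨0, by omega⟩ / (c - ∑ i, s i)) *
            (∫ u in Set.Ioi (0:ℝ), innF k0 hk0 h1 h2 s u) ^ 2
          ≤ (s z / (c - 1)) * (K s * (1 / (2 * (k0:ℝ)))) ^ 2 := by
            apply mul_le_mul hfrac hIsq (sq_nonneg _)
            exact div_nonneg (hs0 _) hc1.le
        _ = (1 / (c - 1)) * (1 / (2 * (k0:ℝ))) ^ 2 *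
              (s z * (B * g1 (s z)) ^ 2 * ∏ j ∈ Finset.univ.erase z, (q (s j)) ^ 2) := by
            simp only [hK_def]
            rw [Finset.prod_pow]
            ring
        _ ≤ G s := by
            rw [hG_def, ← hC_def]
            apply mul_le_mul_of_nonneg_left _ hC_nonneg
            have key0 : s z * (B * g1 (s z)) ^ 2 = g0 (s z) := by
              by_cases hmem : s z ∈ Set.Icc 0 b
              · rw [hg0_def, hg1_def, Set.indicator_of_mem hmem, Set.indicator_of_mem hmem]
                ring
              · rw [hg0_def, hg1_def, Set.indicator_of_notMem hmem,
                  Set.indicator_of_notMem hmem]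
                ring
            have key1 : ∀ x : ℝ, (q x) ^ 2 = g1 x := by
              intro x
              by_cases hmem : x ∈ Set.Icc 0 b
              · rw [hq_def, hg1_def, Set.indicator_of_mem hmem, Set.indicator_of_mem hmem]
              · rw [hq_def, hg1_def, Set.indicator_of_notMem hmem,
                  Set.indicator_of_notMem hmem]
                ring
            rw [key0]
            rw [← Finset.mul_prod_erase Finset.univ
              (fun j : Fin (2*k0-1) => (if (j:ℕ) = 0 then g0 else g1) (s j))
              (Finset.mem_univ z)]
            simp only [hz_def, if_pos]
            apply le_of_eq
            congr 1
            apply Finset.prod_congr rfl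
            intro j hj
            have hjz : j ≠ z := (Finset.mem_erase.mp hj).1
            have : (j:ℕ) ≠ 0 := by
              intro h
              exact hjz (Fin.ext h)
            rw [key1, if_neg this]
  -- integrability of the outer integrand on the simplex
  have houtInt : IntegrableOn (outF θ0 k0 hk0 h1 h2) (simplexSet (2*k0-1) c) := by
    apply Integrable.mono' (hG_int.restrict (s := simplexSet (2*k0-1) c))
      (houtMeas.aestronglyMeasurable.restrict)
    rw [ae_restrict_iff' hS]
    filter_upwards with s hs
    rw [Real.norm_eq_abs, abs_of_nonneg]
    · exact hPoint s hs
    · unfold outF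
      rw [← hc_def]
      apply mul_nonneg _ (sq_nonneg _)
      apply div_nonneg (hs.1 _)
      have := hs.2
      linarith
  -- main chain of inequalities
  have main : ∫ s in simplexSet (2*k0-1) c, outF θ0 k0 hk0 h1 h2 s
      ≤ (1 / 6) * (1 / (c - 1)) * (paperGamma k0 ^ (2*k0-2) / (2 * (k0:ℝ)) ^ (2*k0)) := by
    calc ∫ s in simplexSet (2*k0-1) c, outF θ0 k0 hk0 h1 h2 s
        ≤ ∫ s in simplexSet (2*k0-1) c, G s :=
          setIntegral_mono_on houtInt hG_int.integrableOn hS hPoint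
      _ ≤ ∫ s, G s := setIntegral_le_integral hG_int (Filter.Eventually.of_forall hG_nonneg)
      _ = C * ∫ s : Fin (2*k0-1) → ℝ,
            ∏ j : Fin (2*k0-1), (if (j:ℕ) = 0 then g0 else g1) (s j) := by
          rw [hG_def]
          exact integral_const_mul _ _
      _ = C * ∏ j : Fin (2*k0-1), ∫ x, (if (j:ℕ) = 0 then g0 else g1) x := by
          congr 1
          exact integral_fintype_prod_eq_prod (ι := Fin (2*k0-1)) (μ := fun _ => volume)
            (fun j => if (j:ℕ) = 0 then g0 else g1)
      _ = C * ((∫ x, g0 x) * (∫ x, g1 x) ^ (2*k0-2)) := by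
          have hprod : ∏ j ∈ Finset.univ.erase z, ∫ x, (if (j:ℕ) = 0 then g0 else g1) x
              = (∫ x, g1 x) ^ (2*k0-2) := by
            calc ∏ j ∈ Finset.univ.erase z, ∫ x, (if (j:ℕ) = 0 then g0 else g1) x
                = ∏ _j ∈ Finset.univ.erase z, ∫ x, g1 x :=
                  Finset.prod_congr rfl (fun j hj => by
                    have hjz : j ≠ z := (Finset.mem_erase.mp hj).1
                    have hj0 : (j:ℕ) ≠ 0 := fun h => hjz (Fin.ext h)
                    rw [if_neg hj0])
              _ = (∫ x, g1 x) ^ (2*k0-2) := by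
                  rw [Finset.prod_const, Finset.card_erase_of_mem (Finset.mem_univ z),
                    Finset.card_univ, Fintype.card_fin]
                  congr 1
          rw [← Finset.mul_prod_erase Finset.univ
            (fun j : Fin (2*k0-1) => ∫ x, (if (j:ℕ) = 0 then g0 else g1) x)
            (Finset.mem_univ z), hprod]
          simp [hz_def]
      _ ≤ C * ((1/6) * (paperGamma k0 / (2 * (k0:ℝ))) ^ (2*k0-2)) := by
          apply mul_le_mul_of_nonneg_left _ hC_nonneg
          rw [hg1_val]
          apply mul_le_mul_of_nonneg_right hg0_val
          exact pow_nonneg (hg1_val ▸ hg1_int_nonneg) _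
      _ = (1 / 6) * (1 / (c - 1)) * (paperGamma k0 ^ (2*k0-2) / (2 * (k0:ℝ)) ^ (2*k0)) := by
          rw [hC_def, div_pow]
          have hpow : (2 * (k0:ℝ)) ^ (2*k0) = (2 * (k0:ℝ)) ^ (2*k0-2) * (2 * (k0:ℝ)) ^ 2 := by
            rw [← pow_add]
            congr 1
            omega
          rw [hpow]
          have h2k0 : (0:ℝ) < 2 * (k0:ℝ) := by positivity
          rw [div_mul_eq_div_div]
          field_simp
          ring
          rw [← mul_pow, ← mul_pow, ← mul_pow, ← mul_pow]
          field_simp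
  exact main
end
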